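/- Let λ, c, p, q > 0 with √(pq)·λ ≥ 0, and define f(η,t) = (e^{-λt}/(4c))·[(λ(p+q)/2)·I₀((λ/c)√(pq)·√(c²t²-η²)) + (∂/∂t)I₀((λ/c)√(pq)·√(c²t²-η²))] for |η| < ct. Then ∫_{-ct}^{ct} f(η,t) dη = (e^{-λt}/4)·[e^{λt√(pq)}(1 + (p+q)/(2√(pq))) + e^{-λt√(pq)}(1 - (p+q)/(2√(pq))) - 2]. -/

import Mathlib

open MeasureTheory Real

/-- The modified Bessel function of the first kind of order zero. -/
noncomputable def besselI0 (z : ℝ) : ℝ :=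
  ∑' k : ℕ, (z / 2) ^ (2 * k) / ((Nat.factorial k : ℝ)) ^ 2

lemma summable_exp_like (C X : ℝ) :
    Summable (fun n : ℕ => C * X ^ n / Nat.factorial n) := by
  simpa [mul_div_assoc] using (Real.summable_pow_div_factorial X).mul_left C

lemma besselI0_sqrt (b z : ℝ) (hz : 0 ≤ z) :
    besselI0 (b * Real.sqrt z) = ∑' k : ℕ, (b ^ 2 / 4) ^ k / (Nat.factorial k : ℝ) ^ 2 * z ^ k := by
  unfold besselI0
  refine tsum_congr fun k => ?_
  have h : (b * Real.sqrt z / 2) ^ 2 = (b ^ 2 / 4) * z := by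
    rw [div_pow, mul_pow, Real.sq_sqrt hz]; ring
  rw [pow_mul, h, mul_pow]; ring

lemma deriv_term_bound (C X r : ℝ) (hC : 0 ≤ C) (hX : 0 ≤ X) (hr : 0 ≤ r) (n : ℕ) :
    (n : ℝ) * (C * X ^ n / Nat.factorial n) * r ^ (n - 1)
      ≤ C * (2 * X * (r + 1)) ^ n / Nat.factorial n := by
  have h1 : (n : ℝ) ≤ 2 ^ n := by exact_mod_cast (Nat.lt_two_pow_self).le
  have h2 : r ^ (n - 1) ≤ (r + 1) ^ n :=
    le_trans (pow_le_pow_left₀ hr (by linarith) _)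
      (pow_le_pow_right₀ (by linarith) (Nat.sub_le n 1))
  have key : (n : ℝ) * X ^ n * r ^ (n - 1) ≤ 2 ^ n * X ^ n * (r + 1) ^ n := by
    apply mul_le_mul (mul_le_mul h1 le_rfl (by positivity) (by positivity)) h2
      (by positivity) (by positivity)
  have hfac : (0:ℝ) < Nat.factorial n := by exact_mod_cast Nat.factorial_pos n
  rw [mul_pow, mul_pow]
  have e1 : (n : ℝ) * (C * X ^ n / Nat.factorial n) * r ^ (n - 1)
      = C * ((n : ℝ) * X ^ n * r ^ (n-1)) / Nat.factorial n := by ring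
  rw [e1, div_le_div_iff_of_pos_right hfac]
  exact mul_le_mul_of_nonneg_left key hC

lemma summable_powseries (a : ℕ → ℝ) (C X : ℝ)
    (hb : ∀ n, |a n| ≤ C * X ^ n / Nat.factorial n) (z : ℝ) :
    Summable fun n => a n * z ^ n := by
  refine Summable.of_norm (Summable.of_nonneg_of_le (fun n => norm_nonneg _)
    (fun n => ?_) (summable_exp_like C (X * |z|)))
  rw [norm_mul, norm_pow, Real.norm_eq_abs, Real.norm_eq_abs]
  calc |a n| * |z| ^ n ≤ C * X ^ n / Nat.factorial n * |z| ^ n :=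
        mul_le_mul_of_nonneg_right (hb n) (by positivity)
    _ = C * (X * |z|) ^ n / Nat.factorial n := by rw [mul_pow]; ring

lemma summable_powseries_deriv (a : ℕ → ℝ) (C X : ℝ) (hX : 0 ≤ X)
    (hb : ∀ n, |a n| ≤ C * X ^ n / Nat.factorial n) (z : ℝ) :
    Summable fun n : ℕ => (n : ℝ) * a n * z ^ (n - 1) := by
  have hC : 0 ≤ C := by
    have := (abs_nonneg (a 0)).trans (hb 0)
    simpa using this
  refine Summable.of_norm (Summable.of_nonneg_of_le (fun n => norm_nonneg _)
    (fun n => ?_) (summable_exp_like C (2 * X * (|z| + 1))))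
  rw [norm_mul, norm_mul, norm_pow, Real.norm_eq_abs, Real.norm_eq_abs, Real.norm_eq_abs,
    Nat.abs_cast]
  calc (n : ℝ) * |a n| * |z| ^ (n - 1)
      ≤ (n : ℝ) * (C * X ^ n / Nat.factorial n) * |z| ^ (n - 1) := by
        apply mul_le_mul_of_nonneg_right (mul_le_mul_of_nonneg_left (hb n) n.cast_nonneg)
          (by positivity)
    _ ≤ C * (2 * X * (|z| + 1)) ^ n / Nat.factorial n :=
        deriv_term_bound C X |z| hC hX (abs_nonneg z) n

lemma hasDerivAt_powseries (a : ℕ → ℝ) (C X : ℝ) (hX : 0 ≤ X)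
    (hb : ∀ n, |a n| ≤ C * X ^ n / Nat.factorial n) (z : ℝ) :
    HasDerivAt (fun y => ∑' n : ℕ, a n * y ^ n)
      (∑' n : ℕ, (n : ℝ) * a n * z ^ (n - 1)) z := by
  have hC : 0 ≤ C := by
    have := (abs_nonneg (a 0)).trans (hb 0)
    simpa using this
  set r : ℝ := |z| + 1 with hr
  have hzr : z ∈ Metric.ball (0 : ℝ) r := by
    rw [Metric.mem_ball, Real.dist_eq, sub_zero]; linarith
  refine hasDerivAt_tsum_of_isPreconnected
    (u := fun n => C * (2 * X * (r + 1)) ^ n / Nat.factorial n)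
    (summable_exp_like _ _) Metric.isOpen_ball
    (g := fun n y => a n * y ^ n)
    (g' := fun n y => (n : ℝ) * a n * y ^ (n - 1))
    ((convex_ball _ _).isPreconnected) (fun n y _ => ?_) (fun n y hy => ?_)
    hzr (summable_powseries a C X hb z) hzr
  · simpa [mul_comm, mul_assoc, mul_left_comm] using (hasDerivAt_pow n y).const_mul (a n)
  · have hyr : |y| ≤ r := by
      rw [Metric.mem_ball, Real.dist_eq, sub_zero] at hy
      exact hy.le
    rw [norm_mul, norm_mul, norm_pow, Real.norm_eq_abs, Real.norm_eq_abs, Real.norm_eq_abs,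
      Nat.abs_cast]
    calc (n : ℝ) * |a n| * |y| ^ (n - 1)
        ≤ (n : ℝ) * (C * X ^ n / Nat.factorial n) * r ^ (n - 1) := by
          apply mul_le_mul (mul_le_mul_of_nonneg_left (hb n) n.cast_nonneg)
            (pow_le_pow_left₀ (abs_nonneg _) hyr _) (by positivity) (by positivity)
      _ ≤ C * (2 * X * (r + 1)) ^ n / Nat.factorial n :=
          deriv_term_bound C X r hC hX (by positivity) n

lemma moment_integral (s : ℝ) (hs : 0 < s) (k : ℕ) :
    ∫ η in (-s)..s, (s ^ 2 - η ^ 2) ^ k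
      = s ^ (2 * k + 1) * 2 ^ (2 * k + 1) * (Nat.factorial k : ℝ) ^ 2
          / Nat.factorial (2 * k + 1) := by
  induction k with
  | zero => norm_num [Nat.factorial]; ring
  | succ k ih =>
    have hderiv : ∀ η : ℝ, HasDerivAt (fun η : ℝ => η * (s ^ 2 - η ^ 2) ^ (k + 1))
        ((2 * (k : ℝ) + 3) * (s ^ 2 - η ^ 2) ^ (k + 1)
          - 2 * ((k : ℝ) + 1) * s ^ 2 * (s ^ 2 - η ^ 2) ^ k) η := by
      intro η
      have h1 : HasDerivAt (fun η : ℝ => s ^ 2 - η ^ 2) (-(2 * η)) η := by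
        simpa using (hasDerivAt_pow 2 η).const_sub (s ^ 2)
      have h3 : HasDerivAt (fun η : ℝ => η * (s ^ 2 - η ^ 2) ^ (k + 1))
          (1 * (s ^ 2 - η ^ 2) ^ (k + 1) + η * (((k + 1 : ℕ) : ℝ) * (s ^ 2 - η ^ 2) ^ (k + 1 - 1) * -(2 * η))) η :=
        (hasDerivAt_id η).mul (h1.pow (k + 1))
      convert h3 using 1
      simp only [Nat.add_sub_cancel, id_eq]
      rw [pow_succ]
      push_cast
      ring
    have int1 : IntervalIntegrable (fun η : ℝ => (s ^ 2 - η ^ 2) ^ (k + 1)) volume (-s) s :=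
      (by fun_prop : Continuous fun η : ℝ => (s ^ 2 - η ^ 2) ^ (k + 1)).intervalIntegrable _ _
    have int0 : IntervalIntegrable (fun η : ℝ => (s ^ 2 - η ^ 2) ^ k) volume (-s) s :=
      (by fun_prop : Continuous fun η : ℝ => (s ^ 2 - η ^ 2) ^ k).intervalIntegrable _ _
    have hFTC := intervalIntegral.integral_eq_sub_of_hasDerivAt (a := -s) (b := s)
      (fun x _ => hderiv x)
      (((by fun_prop : Continuous fun η : ℝ =>
        (2 * (k : ℝ) + 3) * (s ^ 2 - η ^ 2) ^ (k + 1)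
          - 2 * ((k : ℝ) + 1) * s ^ 2 * (s ^ 2 - η ^ 2) ^ k)).intervalIntegrable _ _)
    rw [intervalIntegral.integral_sub ((int1.const_mul _)) ((int0.const_mul _)),
      intervalIntegral.integral_const_mul, intervalIntegral.integral_const_mul] at hFTC
    have hbnd : s * (s ^ 2 - s ^ 2) ^ (k + 1) - (-s) * (s ^ 2 - (-s) ^ 2) ^ (k + 1) = 0 := by
      simp
    rw [hbnd] at hFTC
    have h23 : (2 * (k : ℝ) + 3) ≠ 0 := by positivity
    have hnew : ∫ η in (-s)..s, (s ^ 2 - η ^ 2) ^ (k + 1)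
        = 2 * ((k : ℝ) + 1) * s ^ 2 * (∫ η in (-s)..s, (s ^ 2 - η ^ 2) ^ k)
          / (2 * (k : ℝ) + 3) := by
      field_simp at hFTC ⊢
      linarith
    rw [hnew, ih]
    have hfac : (Nat.factorial (2 * (k + 1) + 1) : ℝ)
        = (2 * (k : ℝ) + 3) * (2 * (k : ℝ) + 2) * (Nat.factorial (2 * k + 1)) := by
      have he : 2 * (k + 1) + 1 = (2 * k + 1) + 1 + 1 := by ring
      rw [he, Nat.factorial_succ, Nat.factorial_succ]
      push_cast
      ring
    have hfac2 : (Nat.factorial (k + 1) : ℝ) = ((k : ℝ) + 1) * (Nat.factorial k) := by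
      rw [Nat.factorial_succ]; push_cast; ring
    rw [hfac, hfac2]
    have f1 : (Nat.factorial (2 * k + 1) : ℝ) ≠ 0 := by
      exact_mod_cast (Nat.factorial_pos _).ne'
    field_simp
    ring

lemma setIntegral_powseries (a : ℕ → ℝ) (C X : ℝ)
    (hb : ∀ n, |a n| ≤ C * X ^ n / Nat.factorial n) (s : ℝ) (hs : 0 < s) :
    ∫ η in Set.Ioc (-s) s, (∑' n : ℕ, a n * (s ^ 2 - η ^ 2) ^ n)
      = ∑' n : ℕ, a n * (s ^ (2 * n + 1) * 2 ^ (2 * n + 1) * (Nat.factorial n : ℝ) ^ 2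
          / Nat.factorial (2 * n + 1)) := by
  have hvol : volume (Set.Ioc (-s) s) < ⊤ := by
    rw [Real.volume_Ioc]; exact ENNReal.ofReal_lt_top
  have hInt : ∀ n : ℕ, Integrable (fun η : ℝ => a n * (s ^ 2 - η ^ 2) ^ n)
      (volume.restrict (Set.Ioc (-s) s)) := by
    intro n
    apply Continuous.integrableOn_Ioc
    fun_prop
  have hbd : ∀ n : ℕ, ∀ η ∈ Set.Ioc (-s) s,
      ‖(fun η : ℝ => ‖a n * (s ^ 2 - η ^ 2) ^ n‖) η‖ ≤ |a n| * s ^ (2 * n) := by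
    intro n η hη
    rw [norm_norm, norm_mul, norm_pow, Real.norm_eq_abs, Real.norm_eq_abs]
    have h1 : η ^ 2 ≤ s ^ 2 := by
      rcases hη with ⟨h1, h2⟩
      nlinarith
    have h2 : |s ^ 2 - η ^ 2| ≤ s ^ 2 := by
      rw [abs_of_nonneg (by linarith)]
      nlinarith [sq_nonneg η]
    calc |a n| * |s ^ 2 - η ^ 2| ^ n ≤ |a n| * (s ^ 2) ^ n :=
          mul_le_mul_of_nonneg_left (pow_le_pow_left₀ (abs_nonneg _) h2 n) (abs_nonneg _)
      _ = |a n| * s ^ (2 * n) := by rw [← pow_mul]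
  have hSum : Summable fun n : ℕ => ∫ η in Set.Ioc (-s) s, ‖a n * (s ^ 2 - η ^ 2) ^ n‖ := by
    refine Summable.of_nonneg_of_le
      (fun n => setIntegral_nonneg measurableSet_Ioc fun η _ => norm_nonneg _)
      (fun n => ?_) ((summable_exp_like (C * (2 * s)) (X * s ^ 2)))
    have := norm_setIntegral_le_of_norm_le_const (μ := volume) hvol (hbd n)
    rw [Real.norm_eq_abs] at this
    have h0 : |∫ η in Set.Ioc (-s) s, ‖a n * (s ^ 2 - η ^ 2) ^ n‖|
        = ∫ η in Set.Ioc (-s) s, ‖a n * (s ^ 2 - η ^ 2) ^ n‖ :=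
      abs_of_nonneg (setIntegral_nonneg measurableSet_Ioc fun η _ => norm_nonneg _)
    rw [h0] at this
    refine this.trans ?_
    rw [Real.volume_real_Ioc, max_eq_left (by linarith)]
    have hstep : |a n| * s ^ (2 * n) ≤ C * X ^ n / Nat.factorial n * (s ^ 2) ^ n := by
      rw [← pow_mul]
      exact mul_le_mul_of_nonneg_right (hb n) (by positivity)
    calc |a n| * s ^ (2 * n) * (s - -s)
        ≤ C * X ^ n / Nat.factorial n * (s ^ 2) ^ n * (2 * s) := by
          rw [show s - -s = 2 * s by ring]
          exact mul_le_mul_of_nonneg_right hstep (by positivity)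
      _ = C * (2 * s) * (X * s ^ 2) ^ n / Nat.factorial n := by rw [mul_pow]; ring
  rw [← MeasureTheory.integral_tsum_of_summable_integral_norm hInt hSum]
  refine tsum_congr fun n => ?_
  rw [MeasureTheory.integral_const_mul, ← intervalIntegral.integral_of_le (by linarith),
    moment_integral s hs n]

set_option maxHeartbeats 2000000 in
theorem boundary_density_integral
    (lam c p q t : ℝ) (hlam : 0 < lam) (hc : 0 < c) (hp : 0 < p) (hq : 0 < q)
    (ht : 0 < t)
    (f : ℝ → ℝ → ℝ)
    (hf : ∀ η τ, f η τ =
      Real.exp (-lam * τ) / (4 * c) *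
        (lam * (p + q) / 2 *
            besselI0 (lam / c * Real.sqrt (p * q) * Real.sqrt (c ^ 2 * τ ^ 2 - η ^ 2))
          + deriv (fun σ =>
              besselI0 (lam / c * Real.sqrt (p * q) * Real.sqrt (c ^ 2 * σ ^ 2 - η ^ 2))) τ)) :
    ∫ η in (-(c * t))..(c * t), f η t
      = Real.exp (-lam * t) / 4 *
          (Real.exp (lam * t * Real.sqrt (p * q)) * (1 + (p + q) / (2 * Real.sqrt (p * q)))
            + Real.exp (-(lam * t * Real.sqrt (p * q))) * (1 - (p + q) / (2 * Real.sqrt (p * q)))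
            - 2) := by
  have hpq : 0 < p * q := mul_pos hp hq
  set P : ℝ := Real.sqrt (p * q) with hPdef
  have hP : 0 < P := Real.sqrt_pos.mpr hpq
  set K : ℝ := lam / c * P with hKdef
  have hK : 0 < K := by positivity
  set s : ℝ := c * t with hsdef
  have hs : 0 < s := mul_pos hc ht
  set M : ℝ := K ^ 2 / 4 with hMdef
  have hM : (0:ℝ) ≤ M := by positivity
  set a : ℕ → ℝ := fun n => M ^ n / (Nat.factorial n : ℝ) ^ 2 with hadef
  set b : ℕ → ℝ := fun n => ((n : ℝ) + 1) * a (n + 1) with hbdef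
  have ha_bd : ∀ n, |a n| ≤ 1 * M ^ n / Nat.factorial n := by
    intro n
    have hfac : (1:ℝ) ≤ (Nat.factorial n : ℝ) := by exact_mod_cast Nat.factorial_pos n
    rw [hadef]
    rw [abs_of_nonneg (by positivity), one_mul]
    apply div_le_div_of_nonneg_left (by positivity) (by positivity)
    nlinarith
  have hb_bd : ∀ n, |b n| ≤ M * M ^ n / Nat.factorial n := by
    intro n
    have hfac : (1:ℝ) ≤ (Nat.factorial n : ℝ) := by exact_mod_cast Nat.factorial_pos n
    have hfs : (Nat.factorial (n + 1) : ℝ) = ((n : ℝ) + 1) * Nat.factorial n := by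
      rw [Nat.factorial_succ]; push_cast; ring
    have hbn : b n = M ^ (n + 1) / (((n : ℝ) + 1) * (Nat.factorial n : ℝ) ^ 2) := by
      simp only [hbdef, hadef, hfs]
      field_simp
    rw [hbn, abs_of_nonneg (by positivity), pow_succ, show M * M ^ n = M ^ n * M by ring]
    apply div_le_div_of_nonneg_left (by positivity) (by positivity)
    nlinarith
  set h : ℝ → ℝ := fun z => ∑' n : ℕ, a n * z ^ n with hhdef
  set g : ℝ → ℝ := fun z => ∑' n : ℕ, b n * z ^ n with hgdef
  have hderiv_h : ∀ z, HasDerivAt h (g z) z := by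
    intro z
    have h1 := hasDerivAt_powseries a 1 M hM ha_bd z
    have h2 : (∑' n : ℕ, (n : ℝ) * a n * z ^ (n - 1)) = ∑' n : ℕ, b n * z ^ n := by
      rw [Summable.tsum_eq_zero_add (summable_powseries_deriv a 1 M hM ha_bd z)]
      simp only [Nat.cast_zero, zero_mul, zero_add]
      refine tsum_congr fun n => ?_
      simp only [hbdef, Nat.add_sub_cancel]
      push_cast
      ring
    rw [h2] at h1
    exact h1
  have hcont_h : Continuous h :=
    continuous_iff_continuousAt.mpr fun z => (hderiv_h z).differentiableAt.continuousAt
  have hcont_g : Continuous g := by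
    refine continuous_iff_continuousAt.mpr fun z => ?_
    exact (hasDerivAt_powseries b M M hM hb_bd z).differentiableAt.continuousAt
  have hle : -s ≤ s := by linarith
  have key : Set.EqOn (fun η => f η t)
      (fun η => (Real.exp (-lam * t) / (4 * c) * (lam * (p + q) / 2)) * h (s ^ 2 - η ^ 2)
        + (Real.exp (-lam * t) / (4 * c) * (2 * c ^ 2 * t)) * g (s ^ 2 - η ^ 2))
      (Set.Ioo (-s) s) := by
    intro η hη
    have hη2 : η ^ 2 < s ^ 2 := by
      rcases hη with ⟨h1, h2⟩
      nlinarith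
    have hs2 : s ^ 2 = c ^ 2 * t ^ 2 := by rw [hsdef]; ring
    have hpos : 0 < c ^ 2 * t ^ 2 - η ^ 2 := by nlinarith
    have hU : {σ : ℝ | η ^ 2 < c ^ 2 * σ ^ 2} ∈ nhds t := by
      apply IsOpen.mem_nhds
      · have heq : {σ : ℝ | η ^ 2 < c ^ 2 * σ ^ 2}
            = (fun σ : ℝ => c ^ 2 * σ ^ 2 - η ^ 2) ⁻¹' Set.Ioi 0 := by
          ext σ
          simp only [Set.mem_setOf_eq, Set.mem_preimage, Set.mem_Ioi]
          constructor <;> intro <;> linarith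
        rw [heq]
        exact (by fun_prop : Continuous fun σ : ℝ => c ^ 2 * σ ^ 2 - η ^ 2).isOpen_preimage
          _ isOpen_Ioi
      · simp only [Set.mem_setOf_eq]
        nlinarith
    have heqf : (fun σ => besselI0 (K * Real.sqrt (c ^ 2 * σ ^ 2 - η ^ 2)))
        =ᶠ[nhds t] fun σ => h (c ^ 2 * σ ^ 2 - η ^ 2) := by
      filter_upwards [hU] with σ hσ
      have hσ' : η ^ 2 < c ^ 2 * σ ^ 2 := hσ
      rw [besselI0_sqrt K _ (by linarith)]
    have hw : HasDerivAt (fun σ : ℝ => c ^ 2 * σ ^ 2 - η ^ 2) (2 * c ^ 2 * t) t := by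
      have h0 : HasDerivAt (fun σ : ℝ => σ ^ 2) (2 * t) t := by
        simpa using hasDerivAt_pow 2 t
      have h1 : HasDerivAt (fun σ : ℝ => c ^ 2 * σ ^ 2 - η ^ 2) (c ^ 2 * (2 * t)) t :=
        (h0.const_mul (c ^ 2)).sub_const (η ^ 2)
      convert h1 using 1
      ring
    have hcomp : HasDerivAt (fun σ => h (c ^ 2 * σ ^ 2 - η ^ 2))
        (g (c ^ 2 * t ^ 2 - η ^ 2) * (2 * c ^ 2 * t)) t :=
      HasDerivAt.comp (h₂ := h) t (hderiv_h (c ^ 2 * t ^ 2 - η ^ 2)) hw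
    have hder : deriv (fun σ => besselI0 (K * Real.sqrt (c ^ 2 * σ ^ 2 - η ^ 2))) t
        = g (c ^ 2 * t ^ 2 - η ^ 2) * (2 * c ^ 2 * t) := by
      rw [heqf.deriv_eq]
      exact hcomp.deriv
    simp only
    rw [hf η t, hder, besselI0_sqrt K _ (le_of_lt hpos)]
    simp only [hs2, hhdef, hadef, ← hMdef]
    ring
  rw [intervalIntegral.integral_of_le hle, MeasureTheory.integral_Ioc_eq_integral_Ioo,
    MeasureTheory.setIntegral_congr_fun measurableSet_Ioo key,
    ← MeasureTheory.integral_Ioc_eq_integral_Ioo]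
  have hint1 : Integrable
      (fun η : ℝ => (Real.exp (-lam * t) / (4 * c) * (lam * (p + q) / 2)) * h (s ^ 2 - η ^ 2))
      (volume.restrict (Set.Ioc (-s) s)) := by
    apply Continuous.integrableOn_Ioc
    exact continuous_const.mul (hcont_h.comp (by fun_prop))
  have hint2 : Integrable
      (fun η : ℝ => (Real.exp (-lam * t) / (4 * c) * (2 * c ^ 2 * t)) * g (s ^ 2 - η ^ 2))
      (volume.restrict (Set.Ioc (-s) s)) := by
    apply Continuous.integrableOn_Ioc
    exact continuous_const.mul (hcont_g.comp (by fun_prop))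
  rw [MeasureTheory.integral_add hint1 hint2, MeasureTheory.integral_const_mul,
    MeasureTheory.integral_const_mul]
  have hIa : ∫ η in Set.Ioc (-s) s, h (s ^ 2 - η ^ 2)
      = ∑' n : ℕ, a n * (s ^ (2 * n + 1) * 2 ^ (2 * n + 1) * (Nat.factorial n : ℝ) ^ 2
          / Nat.factorial (2 * n + 1)) := by
    simp only [hhdef]
    exact setIntegral_powseries a 1 M ha_bd s hs
  have hIb : ∫ η in Set.Ioc (-s) s, g (s ^ 2 - η ^ 2)
      = ∑' n : ℕ, b n * (s ^ (2 * n + 1) * 2 ^ (2 * n + 1) * (Nat.factorial n : ℝ) ^ 2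
          / Nat.factorial (2 * n + 1)) := by
    simp only [hgdef]
    exact setIntegral_powseries b M M hb_bd s hs
  rw [hIa, hIb]
  -- now evaluate the two series
  have hKs : K * s = lam * t * P := by
    rw [hKdef, hsdef]
    field_simp
  have hSa : ∑' n : ℕ, a n * (s ^ (2 * n + 1) * 2 ^ (2 * n + 1) * (Nat.factorial n : ℝ) ^ 2
        / Nat.factorial (2 * n + 1))
      = (Real.exp (K * s) - Real.exp (-(K * s))) / K := by
    have hterm : ∀ n : ℕ, a n * (s ^ (2 * n + 1) * 2 ^ (2 * n + 1) * (Nat.factorial n : ℝ) ^ 2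
          / Nat.factorial (2 * n + 1))
        = 2 / K * ((K * s) ^ (2 * n + 1) / Nat.factorial (2 * n + 1)) := by
      intro n
      have hfn : ((Nat.factorial n : ℝ)) ≠ 0 := by exact_mod_cast (Nat.factorial_pos n).ne'
      have hf2 : ((Nat.factorial (2 * n + 1) : ℝ)) ≠ 0 := by
        exact_mod_cast (Nat.factorial_pos _).ne'
      have h4 : (2:ℝ) ^ (2 * n + 1) = 2 * 4 ^ n := by
        rw [show (4:ℝ) = 2^2 by norm_num, ← pow_mul, pow_succ]
        ring
      simp only [hadef, hMdef]
      rw [h4, mul_pow K s, div_pow, ← pow_mul]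
      field_simp
      ring
    rw [tsum_congr hterm, tsum_mul_left, ← Real.sinh_eq_tsum, Real.sinh_eq]
    field_simp
  have hSb : ∑' n : ℕ, b n * (s ^ (2 * n + 1) * 2 ^ (2 * n + 1) * (Nat.factorial n : ℝ) ^ 2
        / Nat.factorial (2 * n + 1))
      = (Real.cosh (K * s) - 1) / s := by
    have hterm : ∀ n : ℕ, b n * (s ^ (2 * n + 1) * 2 ^ (2 * n + 1) * (Nat.factorial n : ℝ) ^ 2
          / Nat.factorial (2 * n + 1))
        = 1 / s * ((K * s) ^ (2 * (n + 1)) / Nat.factorial (2 * (n + 1))) := by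
      intro n
      have hfn : ((Nat.factorial n : ℝ)) ≠ 0 := by exact_mod_cast (Nat.factorial_pos n).ne'
      have hf2 : ((Nat.factorial (2 * n + 1) : ℝ)) ≠ 0 := by
        exact_mod_cast (Nat.factorial_pos _).ne'
      have hfs : (Nat.factorial (n + 1) : ℝ) = ((n : ℝ) + 1) * Nat.factorial n := by
        rw [Nat.factorial_succ]; push_cast; ring
      have hfs2 : (Nat.factorial (2 * (n + 1)) : ℝ)
          = (2 * (n : ℝ) + 2) * Nat.factorial (2 * n + 1) := by
        have he : 2 * (n + 1) = (2 * n + 1) + 1 := by ring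
        rw [he, Nat.factorial_succ]
        push_cast
        ring
      have h4 : (2:ℝ) ^ (2 * n + 1) = 2 * 4 ^ n := by
        rw [show (4:ℝ) = 2^2 by norm_num, ← pow_mul, pow_succ]
        ring
      simp only [hbdef, hadef, hMdef]
      rw [hfs, hfs2, h4, mul_pow K s, div_pow, ← pow_mul]
      field_simp
      ring
    rw [tsum_congr hterm, tsum_mul_left]
    have hc := Real.cosh_eq_tsum (K * s)
    rw [Summable.tsum_eq_zero_add (Real.hasSum_cosh (K * s)).summable] at hc
    norm_num at hc
    rw [show (∑' n : ℕ, (K * s) ^ (2 * (n + 1)) / (Nat.factorial (2 * (n + 1)) : ℝ))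
      = Real.cosh (K * s) - 1 by linarith]
    ring
  rw [hSa, hSb, hKs, Real.cosh_eq]
  have hcn : c ≠ 0 := hc.ne'
  have hKn : K ≠ 0 := hK.ne'
  have hsn : s ≠ 0 := hs.ne'
  have hPn : P ≠ 0 := hP.ne'
  rw [hsdef, hKdef]
  field_simp
  ring
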